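/- Let r, c, ρ, v, f_1,…,f_m be as in the context, and assume additionally that v is monotonically decreasing (v' ≤ 0). For a nonnegative, continuous, compactly supported g : ℝ^d → ℝ let W_g(η) = ∫_{ℝ^d} v(∑_{j=1}^m η_j f_j(x)) g(x) dx and μ_g = Z_g^{-1} e^{-W_g} ρ^{⊗m} with Z_g = ∫ e^{-W_g} dρ^{⊗m}. If g_1 ≤ g_2 pointwise (both nonnegative, continuous, compactly supported), then for every bounded measurable F : ℝ^m → ℝ that is monotonically increasing with respect to the coordinatewise order, ∫ F dμ_{g_1} ≤ ∫ F dμ_{g_2}. -/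

import Mathlib

open MeasureTheory

/-- Convolution of two measures on `ℝ` (law of the sum of independent variables). -/
noncomputable def mconv (μ ν : Measure ℝ) : Measure ℝ :=
  (μ.prod ν).map (fun p => p.1 + p.2)

/-- `n`-fold convolution power of a measure on `ℝ`, with `r^{*0} = δ₀`. -/
noncomputable def convPow (r : Measure ℝ) : ℕ → Measure ℝ
  | 0 => Measure.dirac 0
  | n + 1 => mconv (convPow r n) r

/-- The compound Poisson measure `ρ_{c,r} = e^{-c} ∑_{n} (c^n / n!) r^{*n}`. -/
noncomputable def cPoisson (c : ℝ) (r : Measure ℝ) : Measure ℝ :=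
  Measure.sum (fun n : ℕ =>
    ENNReal.ofReal (Real.exp (-c) * c ^ n / n.factorial) • convPow r n)

/-!
This is Holley's inequality. The reference measure `ρ^{⊗m}` on the distributive lattice `ℝ^m`
satisfies the Ahlswede–Daykin four functions inequality (on `ℝ` by symmetrizing in the two
variables, then coordinate by coordinate), and the interactions satisfy Holley's condition
`W_{g₂}(a ⊔ b) + W_{g₁}(a ⊓ b) ≤ W_{g₁}(a) + W_{g₂}(b)`. The latter holds pointwise in `x`: with
`ℓ(η) = ∑ⱼ ηⱼ fⱼ(x)`, the values `ℓ(a ⊓ b) ≤ ℓ(a), ℓ(b) ≤ ℓ(a ⊔ b)` have the same sums, so concavity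
of `v` gives `v(ℓ(a ⊔ b)) + v(ℓ(a ⊓ b)) ≤ v(ℓ(a)) + v(ℓ(b))`, and `v` decreasing handles the excess
weight `g₂ - g₁ ≥ 0`. The Boltzmann factors `e^{-W_g}` are integrable because `|v(t)| ≤ b|t|` and
the compound Poisson law of a compactly supported `r` has all exponential moments.
-/

open scoped ENNReal

lemma ENNReal.add_le_add_of_mul_le_mul {a b c d : ℝ≥0∞} (hac : a ≤ c) (hbc : b ≤ c)
    (h : a * b ≤ c * d) : a + b ≤ c + d := by
  rcases eq_or_ne c ∞ with rfl | hc
  · simp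
  rcases eq_or_ne d ∞ with rfl | hd
  · simp
  have ha : a ≠ ∞ := ne_top_of_le_ne_top hc hac
  have hb : b ≠ ∞ := ne_top_of_le_ne_top hc hbc
  rw [← ENNReal.toReal_le_toReal (by finiteness) (by finiteness), ENNReal.toReal_add ha hb,
    ENNReal.toReal_add hc hd]
  rw [← ENNReal.toReal_le_toReal ha hc] at hac
  rw [← ENNReal.toReal_le_toReal hb hc] at hbc
  rw [← ENNReal.toReal_le_toReal (by finiteness) (by finiteness), ENNReal.toReal_mul,
    ENNReal.toReal_mul] at h
  have ha0 := a.toReal_nonneg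
  have hb0 := b.toReal_nonneg
  have hd0 := d.toReal_nonneg
  -- `(c - a) (c - b) ≥ 0` gives `c (a + b) ≤ c² + a b ≤ c (c + d)`
  rcases (ha0.trans hac).eq_or_lt with hc0 | hc0
  · nlinarith
  · nlinarith [mul_nonneg (sub_nonneg.2 hac) (sub_nonneg.2 hbc)]

section FourFunctions

variable {X Y : Type*} [MeasurableSpace X] [MeasurableSpace Y]

def HasFourFunctionsProperty [Lattice X] (μ : Measure X) : Prop :=
  ∀ f₁ f₂ f₃ f₄ : X → ℝ≥0∞, Measurable f₁ → Measurable f₂ → Measurable f₃ → Measurable f₄ →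
    (∀ a b, f₁ a * f₂ b ≤ f₃ (a ⊔ b) * f₄ (a ⊓ b)) →
    (∫⁻ x, f₁ x ∂μ) * ∫⁻ x, f₂ x ∂μ ≤ (∫⁻ x, f₃ x ∂μ) * ∫⁻ x, f₄ x ∂μ

lemma lintegral_lintegral_mul_add_mul_swap (μ : Measure X) {p q : X → ℝ≥0∞}
    (hp : Measurable p) (hq : Measurable q) :
    ∫⁻ a, ∫⁻ b, (p a * q b + p b * q a) ∂μ ∂μ = 2 * ((∫⁻ x, p x ∂μ) * ∫⁻ x, q x ∂μ) := by
  have inner : ∀ a, ∫⁻ b, (p a * q b + p b * q a) ∂μ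
      = p a * (∫⁻ x, q x ∂μ) + (∫⁻ x, p x ∂μ) * q a := fun a => by
    rw [lintegral_add_left (hq.const_mul (p a)), lintegral_const_mul _ hq,
      lintegral_mul_const _ hp]
  rw [lintegral_congr inner, lintegral_add_left (hp.mul_const _), lintegral_mul_const _ hp,
    lintegral_const_mul _ hq, two_mul]

lemma hasFourFunctionsProperty_of_linearOrder [LinearOrder X] (μ : Measure X) :
    HasFourFunctionsProperty μ := by
  intro f₁ f₂ f₃ f₄ h₁ h₂ h₃ h₄ hf
  have of_le : ∀ a b, a ≤ b → f₁ a * f₂ b + f₁ b * f₂ a ≤ f₃ a * f₄ b + f₃ b * f₄ a := by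
    intro a b hab
    have hab' := hf a b
    have hba := hf b a
    rw [sup_eq_right.2 hab, inf_eq_left.2 hab] at hab'
    rw [sup_eq_left.2 hab, inf_eq_right.2 hab] at hba
    have hprod : (f₁ a * f₂ b) * (f₁ b * f₂ a) ≤ (f₃ b * f₄ a) * (f₃ a * f₄ b) := by
      have haa := hf a a
      have hbb := hf b b
      simp only [sup_idem, inf_idem] at haa hbb
      calc (f₁ a * f₂ b) * (f₁ b * f₂ a) = (f₁ a * f₂ a) * (f₁ b * f₂ b) := by ring
        _ ≤ (f₃ a * f₄ a) * (f₃ b * f₄ b) := mul_le_mul' haa hbb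
        _ = (f₃ b * f₄ a) * (f₃ a * f₄ b) := by ring
    rw [add_comm (f₃ a * f₄ b)]
    exact ENNReal.add_le_add_of_mul_le_mul hab' hba hprod
  have hsymm : ∀ a b, f₁ a * f₂ b + f₁ b * f₂ a ≤ f₃ a * f₄ b + f₃ b * f₄ a := by
    intro a b
    rcases le_total a b with hab | hba
    · exact of_le a b hab
    · rw [add_comm, add_comm (f₃ a * f₄ b)]
      exact of_le b a hba
  have h := lintegral_mono (μ := μ) fun a => lintegral_mono (μ := μ) fun b => hsymm a b
  rwa [lintegral_lintegral_mul_add_mul_swap μ h₁ h₂, lintegral_lintegral_mul_add_mul_swap μ h₃ h₄,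
    ENNReal.mul_le_mul_iff_right two_ne_zero ENNReal.ofNat_ne_top] at h

lemma HasFourFunctionsProperty.prod [Lattice X] [Lattice Y] {μ : Measure X} {ν : Measure Y}
    [SFinite μ] [SFinite ν] (hμ : HasFourFunctionsProperty μ) (hν : HasFourFunctionsProperty ν) :
    HasFourFunctionsProperty (μ.prod ν) := by
  intro f₁ f₂ f₃ f₄ h₁ h₂ h₃ h₄ hf
  rw [lintegral_prod_symm _ h₁.aemeasurable, lintegral_prod_symm _ h₂.aemeasurable,
    lintegral_prod_symm _ h₃.aemeasurable, lintegral_prod_symm _ h₄.aemeasurable]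
  refine hν _ _ _ _ h₁.lintegral_prod_left' h₂.lintegral_prod_left' h₃.lintegral_prod_left'
    h₄.lintegral_prod_left' fun s t => ?_
  exact hμ _ _ _ _ (h₁.comp (by fun_prop)) (h₂.comp (by fun_prop)) (h₃.comp (by fun_prop))
    (h₄.comp (by fun_prop)) fun a b => hf (a, s) (b, t)

lemma HasFourFunctionsProperty.map [Lattice X] [Lattice Y] {F : Type*} [FunLike F X Y]
    [LatticeHomClass F X Y] {μ : Measure X} (h : HasFourFunctionsProperty μ) (e : F)
    (he : Measurable e) : HasFourFunctionsProperty (μ.map e) := by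
  intro f₁ f₂ f₃ f₄ h₁ h₂ h₃ h₄ hf
  rw [lintegral_map h₁ he, lintegral_map h₂ he, lintegral_map h₃ he, lintegral_map h₄ he]
  refine h _ _ _ _ (h₁.comp he) (h₂.comp he) (h₃.comp he) (h₄.comp he) fun a b => ?_
  simpa only [map_sup, map_inf] using hf (e a) (e b)

lemma HasFourFunctionsProperty.pi [Lattice X] {ρ : Measure X} [SigmaFinite ρ]
    (h : HasFourFunctionsProperty ρ) :
    ∀ n, HasFourFunctionsProperty (Measure.pi fun _ : Fin n => ρ)
  | 0 => by
    intro f₁ f₂ f₃ f₄ _ _ _ _ hf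
    simp only [lintegral_unique]
    have := hf default default
    rw [sup_idem, inf_idem] at this
    calc _ = f₁ default * f₂ default * ((Measure.pi fun _ : Fin 0 => ρ) Set.univ) ^ 2 := by ring
      _ ≤ f₃ default * f₄ default * ((Measure.pi fun _ : Fin 0 => ρ) Set.univ) ^ 2 := by gcongr
      _ = _ := by ring
  | n + 1 => by
    have hcons : ⇑(Fin.consOrderIso fun _ : Fin (n + 1) => X)
        = (MeasurableEquiv.piFinSuccAbove (fun _ : Fin (n + 1) => X) 0).symm := by
      ext p i
      simp [MeasurableEquiv.piFinSuccAbove_symm_apply, Fin.insertNthEquiv]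
    have hpi : (ρ.prod (Measure.pi fun _ : Fin n => ρ)).map
        (Fin.consOrderIso fun _ : Fin (n + 1) => X) = Measure.pi fun _ : Fin (n + 1) => ρ := by
      rw [hcons, ((measurePreserving_piFinSuccAbove (fun _ => ρ) 0).symm _).map_eq]
    rw [← hpi]
    exact (h.prod (HasFourFunctionsProperty.pi h n)).map _ (hcons ▸ MeasurableEquiv.measurable _)

end FourFunctions

section Gibbs

variable {X : Type*} [MeasurableSpace X]

lemma HasFourFunctionsProperty.holley [Lattice X] {P : Measure X}
    (hP : HasFourFunctionsProperty P) {w₁ w₂ G : X → ℝ≥0∞} (hw₁ : Measurable w₁)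
    (hw₂ : Measurable w₂) (hw : ∀ a b, w₁ a * w₂ b ≤ w₂ (a ⊔ b) * w₁ (a ⊓ b))
    (hG : Measurable G) (hGm : Monotone G) :
    (∫⁻ x, G x * w₁ x ∂P) * ∫⁻ x, w₂ x ∂P ≤ (∫⁻ x, G x * w₂ x ∂P) * ∫⁻ x, w₁ x ∂P :=
  hP _ _ _ _ (hG.mul hw₁) hw₂ (hG.mul hw₂) hw₁ fun a b =>
    calc G a * w₁ a * w₂ b = G a * (w₁ a * w₂ b) := mul_assoc ..
      _ ≤ G (a ⊔ b) * (w₂ (a ⊔ b) * w₁ (a ⊓ b)) := mul_le_mul' (hGm le_sup_left) (hw a b)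
      _ = G (a ⊔ b) * w₂ (a ⊔ b) * w₁ (a ⊓ b) := (mul_assoc ..).symm

lemma HasFourFunctionsProperty.holley_integral [Lattice X] {P : Measure X}
    (hP : HasFourFunctionsProperty P) {w₁ w₂ G : X → ℝ} (hw₁ : Measurable w₁)
    (hw₂ : Measurable w₂) (hw₁i : Integrable w₁ P) (hw₂i : Integrable w₂ P)
    (hw₁0 : 0 ≤ w₁) (hw₂0 : 0 ≤ w₂) (hw : ∀ a b, w₁ a * w₂ b ≤ w₂ (a ⊔ b) * w₁ (a ⊓ b))
    (hG : Measurable G) (hG0 : 0 ≤ G) (hGb : ∃ M, ∀ x, G x ≤ M) (hGm : Monotone G) :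
    (∫ x, G x * w₁ x ∂P) * ∫ x, w₂ x ∂P ≤ (∫ x, G x * w₂ x ∂P) * ∫ x, w₁ x ∂P := by
  obtain ⟨M, hM⟩ := hGb
  have hGw : ∀ w : X → ℝ, Integrable w P → 0 ≤ w → ENNReal.ofReal (∫ x, G x * w x ∂P)
      = ∫⁻ x, ENNReal.ofReal (G x) * ENNReal.ofReal (w x) ∂P := fun w hwi hw0 => by
    have hi : Integrable (fun x => G x * w x) P :=
      hwi.bdd_mul hG.aestronglyMeasurable
        (.of_forall fun x => by simpa [abs_of_nonneg (hG0 x)] using hM x)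
    simp_rw [← ENNReal.ofReal_mul (hG0 _)]
    exact ofReal_integral_eq_lintegral_ofReal hi (.of_forall fun x => mul_nonneg (hG0 x) (hw0 x))
  have hw' : ∀ w : X → ℝ, Integrable w P → 0 ≤ w →
      ENNReal.ofReal (∫ x, w x ∂P) = ∫⁻ x, ENNReal.ofReal (w x) ∂P := fun w hwi hw0 =>
    ofReal_integral_eq_lintegral_ofReal hwi (.of_forall hw0)
  have h := hP.holley hw₁.ennreal_ofReal hw₂.ennreal_ofReal (fun a b => by
      rw [← ENNReal.ofReal_mul (hw₁0 a), ← ENNReal.ofReal_mul (hw₂0 _)]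
      exact ENNReal.ofReal_le_ofReal (hw a b))
    hG.ennreal_ofReal fun a b hab => ENNReal.ofReal_le_ofReal (hGm hab)
  rw [← hGw w₁ hw₁i hw₁0, ← hGw w₂ hw₂i hw₂0, ← hw' w₁ hw₁i hw₁0, ← hw' w₂ hw₂i hw₂0,
    ← ENNReal.ofReal_mul (integral_nonneg fun x => mul_nonneg (hG0 x) (hw₁0 x)),
    ← ENNReal.ofReal_mul (integral_nonneg fun x => mul_nonneg (hG0 x) (hw₂0 x))] at h
  exact (ENNReal.ofReal_le_ofReal_iff (mul_nonneg
    (integral_nonneg fun x => mul_nonneg (hG0 x) (hw₂0 x)) (integral_nonneg hw₁0))).1 h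

noncomputable def gibbsMeasure (P : Measure X) (H : X → ℝ) : Measure X :=
  P.withDensity fun x => ENNReal.ofReal (Real.exp (-H x) / ∫ y, Real.exp (-H y) ∂P)

lemma integral_gibbsMeasure {P : Measure X} {H : X → ℝ}
    (hH : Integrable (fun x => Real.exp (-H x)) P) (F : X → ℝ) :
    ∫ x, F x ∂(gibbsMeasure P H)
      = (∫ x, F x * Real.exp (-H x) ∂P) / ∫ x, Real.exp (-H x) ∂P := by
  rw [gibbsMeasure, integral_withDensity_eq_integral_toReal_smul₀
    (hH.aemeasurable.div_const _).ennreal_ofReal (.of_forall fun _ => ENNReal.ofReal_lt_top),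
    div_eq_inv_mul, ← integral_const_mul]
  refine integral_congr_ae (.of_forall fun x => ?_)
  dsimp only
  rw [ENNReal.toReal_ofReal (div_nonneg (Real.exp_pos _).le
    (integral_nonneg fun _ => (Real.exp_pos _).le)), smul_eq_mul]
  ring

lemma integral_exp_neg_pos {P : Measure X} [NeZero P] {H : X → ℝ}
    (hH : Integrable (fun x => Real.exp (-H x)) P) : 0 < ∫ x, Real.exp (-H x) ∂P := by
  rw [integral_pos_iff_support_of_nonneg (fun x => (Real.exp_pos _).le) hH,
    Function.support_eq_univ fun x => (Real.exp_pos _).ne']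
  exact Measure.measure_univ_pos.2 (NeZero.ne P)

lemma HasFourFunctionsProperty.integral_gibbsMeasure_mono [Lattice X] {P : Measure X} [NeZero P]
    (hP : HasFourFunctionsProperty P) {H₁ H₂ : X → ℝ} (hH₁ : Measurable H₁) (hH₂ : Measurable H₂)
    (hi₁ : Integrable (fun x => Real.exp (-H₁ x)) P)
    (hi₂ : Integrable (fun x => Real.exp (-H₂ x)) P)
    (hH : ∀ a b, H₂ (a ⊔ b) + H₁ (a ⊓ b) ≤ H₁ a + H₂ b)
    {F : X → ℝ} (hF : Measurable F) (hFb : ∃ M, ∀ x, |F x| ≤ M) (hFm : Monotone F) :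
    ∫ x, F x ∂(gibbsMeasure P H₁) ≤ ∫ x, F x ∂(gibbsMeasure P H₂) := by
  obtain ⟨M, hM⟩ := hFb
  have hFi : ∀ H : X → ℝ, Integrable (fun x => Real.exp (-H x)) P →
      Integrable (fun x => F x * Real.exp (-H x)) P := fun H hi =>
    hi.bdd_mul hF.aestronglyMeasurable (.of_forall hM)
  have h := hP.holley_integral (w₁ := fun x => Real.exp (-H₁ x))
    (w₂ := fun x => Real.exp (-H₂ x)) (G := fun x => F x + M) (by fun_prop) (by fun_prop) hi₁ hi₂
    (fun x => (Real.exp_pos _).le) (fun x => (Real.exp_pos _).le)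
    (fun a b => by
      rw [← Real.exp_add, ← Real.exp_add]
      exact Real.exp_le_exp.2 (by linarith [hH a b]))
    (hF.add_const M) (fun x => show 0 ≤ F x + M by linarith [neg_abs_le (F x), hM x])
    ⟨M + M, fun x => by linarith [le_abs_self (F x), hM x]⟩
    fun a b hab => by simpa using hFm hab
  simp only [add_mul] at h
  rw [integral_add (hFi H₁ hi₁) (hi₁.const_mul M), integral_add (hFi H₂ hi₂) (hi₂.const_mul M),
    integral_const_mul, integral_const_mul] at h
  rw [integral_gibbsMeasure hi₁, integral_gibbsMeasure hi₂,
    div_le_div_iff₀ (integral_exp_neg_pos hi₁) (integral_exp_neg_pos hi₂)]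
  linarith

end Gibbs

lemma mconv_eq_conv (μ ν : Measure ℝ) : mconv μ ν = μ ∗ ν := rfl

instance (r : Measure ℝ) [IsProbabilityMeasure r] (n : ℕ) :
    IsProbabilityMeasure (convPow r n) := by
  induction n with
  | zero => exact Measure.dirac.isProbabilityMeasure
  | succ n ih => rw [convPow, mconv_eq_conv]; infer_instance

lemma isProbabilityMeasure_cPoisson {c : ℝ} (hc : 0 ≤ c) (r : Measure ℝ) [IsProbabilityMeasure r] :
    IsProbabilityMeasure (cPoisson c r) := by
  constructor
  simp only [cPoisson, Measure.sum_apply _ MeasurableSet.univ, Measure.smul_apply, measure_univ,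
    smul_eq_mul, mul_one]
  rw [← ENNReal.ofReal_tsum_of_nonneg (fun n => by positivity)
    (by simpa [mul_div_assoc] using (Real.summable_pow_div_factorial c).mul_left (Real.exp (-c)))]
  simp_rw [mul_div_assoc]
  rw [tsum_mul_left, ← congr_fun NormedSpace.exp_eq_tsum_div, ← Real.exp_eq_exp_ℝ,
    ← Real.exp_add, neg_add_cancel, Real.exp_zero, ENNReal.ofReal_one]

lemma lintegral_convPow_le_pow {r : Measure ℝ} [SFinite r] {φ : ℝ → ℝ≥0∞} (hφ : Measurable φ)
    (hφ0 : φ 0 ≤ 1) (hφmul : ∀ x y, φ (x + y) ≤ φ x * φ y) :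
    ∀ n, ∫⁻ t, φ t ∂(convPow r n) ≤ (∫⁻ t, φ t ∂r) ^ n
  | 0 => by simpa [convPow, lintegral_dirac' _ hφ] using hφ0
  | n + 1 =>
    calc ∫⁻ t, φ t ∂(convPow r (n + 1)) = ∫⁻ x, ∫⁻ y, φ (x + y) ∂r ∂(convPow r n) :=
          Measure.lintegral_conv hφ
      _ ≤ ∫⁻ x, φ x * ∫⁻ y, φ y ∂r ∂(convPow r n) := lintegral_mono fun x => by
          rw [← lintegral_const_mul _ hφ]
          exact lintegral_mono fun y => hφmul x y
      _ = (∫⁻ t, φ t ∂(convPow r n)) * ∫⁻ t, φ t ∂r := lintegral_mul_const _ hφ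
      _ ≤ (∫⁻ t, φ t ∂r) ^ n * ∫⁻ t, φ t ∂r := by
          gcongr; exact lintegral_convPow_le_pow hφ hφ0 hφmul n
      _ = (∫⁻ t, φ t ∂r) ^ (n + 1) := (pow_succ ..).symm

lemma lintegral_cPoisson_lt_top {c : ℝ} (hc : 0 ≤ c) {r : Measure ℝ} [SFinite r]
    {φ : ℝ → ℝ≥0∞} (hφ : Measurable φ) (hφ0 : φ 0 ≤ 1) (hφmul : ∀ x y, φ (x + y) ≤ φ x * φ y)
    (hr : ∫⁻ t, φ t ∂r < ∞) : ∫⁻ t, φ t ∂(cPoisson c r) < ∞ := by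
  set A := (∫⁻ t, φ t ∂r).toReal
  have hA : ∫⁻ t, φ t ∂r = ENNReal.ofReal A := (ENNReal.ofReal_toReal hr.ne).symm
  have hA0 : 0 ≤ A := ENNReal.toReal_nonneg
  rw [cPoisson, lintegral_sum_measure]
  calc ∑' n, ∫⁻ t, φ t ∂(ENNReal.ofReal (Real.exp (-c) * c ^ n / n.factorial) • convPow r n)
      ≤ ∑' n : ℕ, ENNReal.ofReal (Real.exp (-c) * (c * A) ^ n / n.factorial) := by
        refine ENNReal.tsum_le_tsum fun n => ?_
        calc ∫⁻ t, φ t ∂(ENNReal.ofReal (Real.exp (-c) * c ^ n / n.factorial) • convPow r n)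
            = ENNReal.ofReal (Real.exp (-c) * c ^ n / n.factorial) * ∫⁻ t, φ t ∂(convPow r n) :=
              lintegral_smul_measure ..
          _ ≤ ENNReal.ofReal (Real.exp (-c) * c ^ n / n.factorial) * ENNReal.ofReal A ^ n := by
              rw [← hA]; gcongr; exact lintegral_convPow_le_pow hφ hφ0 hφmul n
          _ = ENNReal.ofReal (Real.exp (-c) * (c * A) ^ n / n.factorial) := by
              rw [← ENNReal.ofReal_pow hA0, ← ENNReal.ofReal_mul (by positivity)]
              ring_nf
    _ = ENNReal.ofReal (∑' n : ℕ, Real.exp (-c) * (c * A) ^ n / n.factorial) :=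
        (ENNReal.ofReal_tsum_of_nonneg (fun n => by positivity) (by
          simpa [mul_div_assoc] using
            (Real.summable_pow_div_factorial (c * A)).mul_left (Real.exp (-c)))).symm
    _ < ∞ := ENNReal.ofReal_lt_top

lemma integrable_exp_mul_abs_cPoisson {c : ℝ} (hc : 0 ≤ c) {r : Measure ℝ} [IsFiniteMeasure r]
    {C : ℝ} (hsupp : r (Set.Icc (-C) C)ᶜ = 0) {K : ℝ} (hK : 0 ≤ K) :
    Integrable (fun t => Real.exp (K * |t|)) (cPoisson c r) := by
  refine ⟨by fun_prop, ?_⟩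
  rw [hasFiniteIntegral_iff_ofReal (.of_forall fun t => (Real.exp_pos _).le)]
  refine lintegral_cPoisson_lt_top hc (by fun_prop) (by simp) (fun x y => ?_) ?_
  · rw [← ENNReal.ofReal_mul (Real.exp_pos _).le, ← Real.exp_add, ← mul_add]
    exact ENNReal.ofReal_le_ofReal (Real.exp_le_exp.2 (by gcongr; exact abs_add_le x y))
  · have hbound :
        ∀ᵐ t ∂r, ENNReal.ofReal (Real.exp (K * |t|)) ≤ ENNReal.ofReal (Real.exp (K * C)) :=
      measure_eq_zero_iff_ae_notMem.1 hsupp |>.mono fun t ht => by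
        have : |t| ≤ C := abs_le.2 (by simpa using ht)
        gcongr
    calc ∫⁻ t, ENNReal.ofReal (Real.exp (K * |t|)) ∂r
        ≤ ∫⁻ _, ENNReal.ofReal (Real.exp (K * C)) ∂r := lintegral_mono_ae hbound
      _ < ∞ := by simp [lintegral_const, ENNReal.mul_lt_top]

lemma integrable_exp_mul_sum_abs_pi {ι : Type*} [Fintype ι] {ρ : Measure ℝ} [SigmaFinite ρ]
    {K : ℝ} (h : Integrable (fun t => Real.exp (K * |t|)) ρ) :
    Integrable (fun η : ι → ℝ => Real.exp (K * ∑ j, |η j|)) (Measure.pi fun _ => ρ) := by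
  simpa only [Finset.mul_sum, Real.exp_sum] using Integrable.fintype_prod fun _ : ι => h

lemma ConcaveOn.add_le_add_of_le_of_add_eq {v : ℝ → ℝ} (hv : ConcaveOn ℝ Set.univ v)
    {p q s t : ℝ} (hsp : s ≤ p) (hsq : s ≤ q) (h : t + s = p + q) : v t + v s ≤ v p + v q := by
  rcases hsp.eq_or_lt with rfl | hsp'
  · obtain rfl : t = q := by linarith
    rw [add_comm]
  -- `p` and `q` are the convex combinations `l s + (1 - l) t` and `(1 - l) s + l t`
  have hts : 0 < t - s := by linarith
  set l := (t - p) / (t - s)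
  have hl0 : 0 ≤ l := div_nonneg (by linarith) hts.le
  have hl1 : l ≤ 1 := (div_le_one hts).2 (by linarith)
  have hlts : l * (t - s) = t - p := div_mul_cancel₀ _ hts.ne'
  have hp := hv.2 (Set.mem_univ s) (Set.mem_univ t) hl0 (sub_nonneg.2 hl1) (add_sub_cancel l 1)
  have hq := hv.2 (Set.mem_univ s) (Set.mem_univ t) (sub_nonneg.2 hl1) hl0 (sub_add_cancel 1 l)
  simp only [smul_eq_mul] at hp hq
  rw [show l * s + (1 - l) * t = p by linear_combination -hlts] at hp
  rw [show (1 - l) * s + l * t = q by linear_combination hlts + h] at hq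
  linarith

lemma ConcaveOn.mul_add_mul_le_of_antitone {v : ℝ → ℝ} (hvc : ConcaveOn ℝ Set.univ v)
    (hva : Antitone v) {p q s t : ℝ} (hsp : s ≤ p) (hsq : s ≤ q) (h : t + s = p + q)
    {g₁ g₂ : ℝ} (hg₁ : 0 ≤ g₁) (hg : g₁ ≤ g₂) : v t * g₂ + v s * g₁ ≤ v p * g₁ + v q * g₂ := by
  have hsum := mul_le_mul_of_nonneg_right (hvc.add_le_add_of_le_of_add_eq hsp hsq h) hg₁
  have hqt := mul_le_mul_of_nonneg_right (hva (show q ≤ t by linarith)) (sub_nonneg.2 hg)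
  linarith

section Interaction

variable {ι E : Type*} [Fintype ι] [MeasurableSpace E]

noncomputable def interaction (v : ℝ → ℝ) (f : ι → E → ℝ) (ν : Measure E) (g : E → ℝ)
    (η : ι → ℝ) : ℝ :=
  ∫ x, v (∑ j, η j * f j x) * g x ∂ν

variable {v : ℝ → ℝ} {f : ι → E → ℝ} {ν : Measure E}

lemma interaction_sup_add_inf_le (hvc : ConcaveOn ℝ Set.univ v) (hva : Antitone v)
    (hf0 : ∀ j x, 0 ≤ f j x) {g₁ g₂ : E → ℝ} (hg₁0 : ∀ x, 0 ≤ g₁ x) (hg : ∀ x, g₁ x ≤ g₂ x)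
    (hi₁ : ∀ η : ι → ℝ, Integrable (fun x => v (∑ j, η j * f j x) * g₁ x) ν)
    (hi₂ : ∀ η : ι → ℝ, Integrable (fun x => v (∑ j, η j * f j x) * g₂ x) ν) (a b : ι → ℝ) :
    interaction v f ν g₂ (a ⊔ b) + interaction v f ν g₁ (a ⊓ b)
      ≤ interaction v f ν g₁ a + interaction v f ν g₂ b := by
  unfold interaction
  rw [← integral_add (hi₂ _) (hi₁ _), ← integral_add (hi₁ _) (hi₂ _)]
  refine integral_mono ((hi₂ _).add (hi₁ _)) ((hi₁ _).add (hi₂ _)) fun x => ?_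
  refine hvc.mul_add_mul_le_of_antitone hva
    (Finset.sum_le_sum fun j _ => mul_le_mul_of_nonneg_right inf_le_left (hf0 j x))
    (Finset.sum_le_sum fun j _ => mul_le_mul_of_nonneg_right inf_le_right (hf0 j x)) ?_
    (hg₁0 x) (hg x)
  simp only [← Finset.sum_add_distrib, ← add_mul, Pi.sup_apply, max_add_min]

lemma neg_interaction_le {b : ℝ} (hb : 0 ≤ b) (hvb : ∀ t, |v t| ≤ b * |t|) (hf0 : ∀ j x, 0 ≤ f j x)
    {g : E → ℝ} (hg0 : ∀ x, 0 ≤ g x) {η : ι → ℝ}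
    (hi : Integrable (fun x => v (∑ j, η j * f j x) * g x) ν)
    (hfg : Integrable (fun x => (∑ j, f j x) * g x) ν) :
    -interaction v f ν g η ≤ (b * ∫ x, (∑ j, f j x) * g x ∂ν) * ∑ j, |η j| := by
  rw [interaction, ← integral_neg, mul_comm, ← mul_assoc, ← integral_const_mul]
  refine integral_mono hi.neg (hfg.const_mul _) fun x => ?_
  have hlin : |∑ j, η j * f j x| ≤ (∑ j, |η j|) * ∑ j, f j x := by
    rw [Finset.sum_mul]
    refine (Finset.abs_sum_le_sum_abs _ _).trans (Finset.sum_le_sum fun j _ => ?_)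
    rw [abs_mul, abs_of_nonneg (hf0 j x)]
    exact mul_le_mul_of_nonneg_left
      (Finset.single_le_sum (fun k _ => hf0 k x) (Finset.mem_univ j)) (abs_nonneg _)
  calc -(v (∑ j, η j * f j x) * g x) ≤ b * |∑ j, η j * f j x| * g x := by
        rw [← neg_mul]
        exact mul_le_mul_of_nonneg_right ((neg_le_abs _).trans (hvb _)) (hg0 x)
    _ ≤ b * ((∑ j, |η j|) * ∑ j, f j x) * g x := by gcongr; exact hg0 x
    _ = (∑ j, |η j|) * b * ((∑ j, f j x) * g x) := by ring

variable [TopologicalSpace E] [OpensMeasurableSpace E]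

lemma measurable_interaction [SFinite ν] (hv : Continuous v) (hf : ∀ j, Continuous (f j))
    {g : E → ℝ} (hg : Continuous g) : Measurable (interaction v f ν g) := by
  have hcont : Continuous fun p : (ι → ℝ) × E => v (∑ j, p.1 j * f j p.2) * g p.2 := by fun_prop
  exact hcont.stronglyMeasurable.integral_prod_right'.measurable

lemma integrable_interaction_integrand [IsFiniteMeasureOnCompacts ν] (hv : Continuous v)
    (hf : ∀ j, Continuous (f j)) {g : E → ℝ} (hg : Continuous g) (hgs : HasCompactSupport g)
    (η : ι → ℝ) : Integrable (fun x => v (∑ j, η j * f j x) * g x) ν :=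
  (by fun_prop : Continuous _).integrable_of_hasCompactSupport hgs.mul_left

lemma integrable_exp_neg_interaction [IsFiniteMeasureOnCompacts ν] [SFinite ν]
    {ρ : Measure ℝ} [SigmaFinite ρ]
    (hρ : ∀ K, 0 ≤ K → Integrable (fun t => Real.exp (K * |t|)) ρ) (hv : Continuous v)
    {b : ℝ} (hb : 0 ≤ b) (hvb : ∀ t, |v t| ≤ b * |t|) (hf : ∀ j, Continuous (f j))
    (hf0 : ∀ j x, 0 ≤ f j x) {g : E → ℝ} (hg : Continuous g) (hgs : HasCompactSupport g)
    (hg0 : ∀ x, 0 ≤ g x) :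
    Integrable (fun η => Real.exp (-interaction v f ν g η)) (Measure.pi fun _ : ι => ρ) := by
  have hfg : Integrable (fun x => (∑ j, f j x) * g x) ν :=
    (by fun_prop : Continuous _).integrable_of_hasCompactSupport hgs.mul_left
  have hK : 0 ≤ b * ∫ x, (∑ j, f j x) * g x ∂ν :=
    mul_nonneg hb <| integral_nonneg fun x =>
      mul_nonneg (Finset.sum_nonneg fun j _ => hf0 j x) (hg0 x)
  refine (integrable_exp_mul_sum_abs_pi (hρ _ hK)).mono'
    (measurable_interaction hv hf hg).neg.exp.aestronglyMeasurable (.of_forall fun η => ?_)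
  rw [Real.norm_eq_abs, Real.abs_exp]
  exact Real.exp_le_exp.2 (neg_interaction_le hb hvb hf0 hg0
    (integrable_interaction_integrand hv hf hg hgs η) hfg)

end Interaction

lemma abs_le_mul_abs_of_abs_deriv_le {v : ℝ → ℝ} (hv : Differentiable ℝ v) (hv0 : v 0 = 0)
    {b : ℝ} (hb : ∀ t, |deriv v t| ≤ b) (t : ℝ) : |v t| ≤ b * |t| := by
  simpa [hv0] using Convex.norm_image_sub_le_of_norm_deriv_le (fun x _ => hv x)
    (fun x _ => hb x) convex_univ (Set.mem_univ 0) (Set.mem_univ t)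

theorem lattice_gibbs_monotone_in_cutoff_general
    (d m : ℕ) (C : ℝ)
    (r : Measure ℝ) [IsProbabilityMeasure r] (hsupp : r (Set.Icc (-C) C)ᶜ = 0)
    (c : ℝ) (hc : 0 < c)
    (v : ℝ → ℝ) (hv : ContDiff ℝ 2 v) (hv0 : v 0 = 0)
    (b : ℝ) (hb : 0 < b) (hv' : ∀ t, |deriv v t| ≤ b)
    (hv'' : ∀ t, deriv (deriv v) t ≤ 0) (hvdec : Antitone v)
    (f : Fin m → (Fin d → ℝ) → ℝ) (hf0 : ∀ j x, 0 ≤ f j x)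
    (hfc : ∀ j, Continuous (f j))
    (g₁ g₂ : (Fin d → ℝ) → ℝ)
    (hg₁0 : ∀ x, 0 ≤ g₁ x) (hg₁c : Continuous g₁) (hg₁s : HasCompactSupport g₁)
    (hg₂0 : ∀ x, 0 ≤ g₂ x) (hg₂c : Continuous g₂) (hg₂s : HasCompactSupport g₂)
    (hg : ∀ x, g₁ x ≤ g₂ x)
    (W : ((Fin d → ℝ) → ℝ) → (Fin m → ℝ) → ℝ)
    (hW : ∀ g η, W g η = ∫ x, v (∑ j, η j * f j x) * g x)
    (μ : ((Fin d → ℝ) → ℝ) → Measure (Fin m → ℝ))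
    (hμ : ∀ g, μ g = (Measure.pi fun _ : Fin m => cPoisson c r).withDensity
      (fun η => ENNReal.ofReal (Real.exp (-W g η) /
        ∫ η', Real.exp (-W g η') ∂(Measure.pi fun _ : Fin m => cPoisson c r)))) :
    ∀ F : (Fin m → ℝ) → ℝ, Measurable F → (∃ M, ∀ η, |F η| ≤ M) → Monotone F →
      ∫ η, F η ∂(μ g₁) ≤ ∫ η, F η ∂(μ g₂) := by
  intro F hF hFb hFm
  have := isProbabilityMeasure_cPoisson hc.le r
  have hvc : ConcaveOn ℝ Set.univ v :=
    concaveOn_univ_of_deriv2_nonpos (hv.differentiable two_ne_zero) hv.differentiable_deriv_two hv''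
  have hvb := abs_le_mul_abs_of_abs_deriv_le (hv.differentiable two_ne_zero) hv0 hv'
  have hexp {g} (hgc : Continuous g) (hgs : HasCompactSupport g) (hg0 : ∀ x, 0 ≤ g x) :=
    integrable_exp_neg_interaction (ι := Fin m) (ν := volume)
      (fun K hK => integrable_exp_mul_abs_cPoisson hc.le hsupp hK) hv.continuous hb.le hvb hfc hf0
      hgc hgs hg0
  have hint {g} (hgc : Continuous g) (hgs : HasCompactSupport g) :=
    integrable_interaction_integrand (ν := volume) hv.continuous hfc hgc hgs
  obtain rfl : W = fun g => interaction v f volume g := funext fun g => funext (hW g)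
  rw [hμ, hμ]
  exact ((hasFourFunctionsProperty_of_linearOrder _).pi m).integral_gibbsMeasure_mono
    (measurable_interaction hv.continuous hfc hg₁c) (measurable_interaction hv.continuous hfc hg₂c)
    (hexp hg₁c hg₁s hg₁0) (hexp hg₂c hg₂s hg₂0)
    (interaction_sup_add_inf_le hvc hvdec hf0 hg₁0 hg (hint hg₁c hg₁s) (hint hg₂c hg₂s)) hF hFb hFm

/-- finite lattice analog of Proposition 4.1: for a monotonically
decreasing concave energy density `v`, expectations of coordinatewise increasing
bounded observables under the lattice Gibbs measures `μ_g` are monotone in the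
infra-red cutoff `g`: `g₁ ≤ g₂` implies `∫ F dμ_{g₁} ≤ ∫ F dμ_{g₂}`. -/
theorem lattice_gibbs_monotone_in_cutoff
    (d m : ℕ) (hm : 1 ≤ m) (C : ℝ) (hC : 0 < C)
    (r : Measure ℝ) [IsProbabilityMeasure r] (hsupp : r (Set.Icc (-C) C)ᶜ = 0)
    (c : ℝ) (hc : 0 < c)
    (v : ℝ → ℝ) (hv : ContDiff ℝ 2 v) (hv0 : v 0 = 0)
    (b : ℝ) (hb : 0 < b) (hv' : ∀ t, |deriv v t| ≤ b)
    (hv'' : ∀ t, deriv (deriv v) t ≤ 0) (hvdec : Antitone v)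
    (f : Fin m → (Fin d → ℝ) → ℝ) (hf0 : ∀ j x, 0 ≤ f j x)
    (hfc : ∀ j, Continuous (f j)) (hfs : ∀ j, HasCompactSupport (f j))
    (g₁ g₂ : (Fin d → ℝ) → ℝ)
    (hg₁0 : ∀ x, 0 ≤ g₁ x) (hg₁c : Continuous g₁) (hg₁s : HasCompactSupport g₁)
    (hg₂0 : ∀ x, 0 ≤ g₂ x) (hg₂c : Continuous g₂) (hg₂s : HasCompactSupport g₂)
    (hg : ∀ x, g₁ x ≤ g₂ x)
    (W : ((Fin d → ℝ) → ℝ) → (Fin m → ℝ) → ℝ)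
    (hW : ∀ g η, W g η = ∫ x, v (∑ j, η j * f j x) * g x)
    (μ : ((Fin d → ℝ) → ℝ) → Measure (Fin m → ℝ))
    (hμ : ∀ g, μ g = (Measure.pi fun _ : Fin m => cPoisson c r).withDensity
      (fun η => ENNReal.ofReal (Real.exp (-W g η) /
        ∫ η', Real.exp (-W g η') ∂(Measure.pi fun _ : Fin m => cPoisson c r)))) :
    ∀ F : (Fin m → ℝ) → ℝ, Measurable F → (∃ M, ∀ η, |F η| ≤ M) → Monotone F →
      ∫ η, F η ∂(μ g₁) ≤ ∫ η, F η ∂(μ g₂) :=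
  lattice_gibbs_monotone_in_cutoff_general d m C r hsupp c hc v hv hv0 b hb hv' hv'' hvdec f hf0 hfc
    g₁ g₂ hg₁0 hg₁c hg₁s hg₂0 hg₂c hg₂s hg W hW μ hμ
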